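/- Let λ1 ≥ λ2 ≥ λ3 ≥ λ4 ≥ 0 with λ1 + λ2 + λ3 + λ4 = 1 and 2λ2 + λ3 − λ1 < 0, and suppose Λ is a non-entangling (NE) map with Λ(ρ_λ) = σ_λ, where ρ_λ = λ1 Φ1 + λ2 |01⟩⟨01| + λ3 Φ2 + λ4 |10⟩⟨10| and σ_λ = ∑_i λ_i Φ_i. Then necessarily tr(Φ1 Λ(|01⟩⟨01|)) = tr(Φ1 Λ(|10⟩⟨10|)) = tr(Φ1 Λ(Φ2)) = 0, tr(Φ1 Λ(Φ1)) = 1, and tr(Φ_i Λ(Φ1)) = 0 for i ∈ {2,3,4}. -/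

import Mathlib

open Matrix Kronecker Polynomial
open scoped ComplexOrder

noncomputable section

/-- Index set for two qubits: ℂ²⊗ℂ² ≅ ℂ⁴ with basis |00⟩,|01⟩,|10⟩,|11⟩. -/
abbrev Q2 : Type := Fin 2 × Fin 2
abbrev Mat2 : Type := Matrix (Fin 2) (Fin 2) ℂ
abbrev Mat4 : Type := Matrix Q2 Q2 ℂ
abbrev Vec4 : Type := Q2 → ℂ

/-- Computational basis vector |ij⟩. -/
def ket (i j : Fin 2) : Vec4 := fun p => if p = (i, j) then 1 else 0

/-- The rank-one matrix |ψ⟩⟨φ|. -/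
def ketBra (ψ φ : Vec4) : Mat4 := fun p q => ψ p * star (φ q)

/-- The four Bell vectors |Φ1⟩,…,|Φ4⟩. -/
def bell : Fin 4 → Vec4 :=
  ![(Real.sqrt 2 : ℂ)⁻¹ • (ket 0 0 + ket 1 1),
    (Real.sqrt 2 : ℂ)⁻¹ • (ket 0 0 - ket 1 1),
    (Real.sqrt 2 : ℂ)⁻¹ • (ket 1 0 + ket 0 1),
    (Real.sqrt 2 : ℂ)⁻¹ • (ket 1 0 - ket 0 1)]

/-- Bell projectors Φ_i = |Φ_i⟩⟨Φ_i|. -/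
def bellProj (i : Fin 4) : Mat4 := ketBra (bell i) (bell i)

/-- A two-qubit density matrix: Hermitian positive semidefinite with trace one. -/
def IsDensity (ρ : Mat4) : Prop := ρ.PosSemidef ∧ ρ.trace = 1

/-- Unit vector in ℂ². -/
def IsUnitVec (u : Fin 2 → ℂ) : Prop := ∑ x, Complex.normSq (u x) = 1

/-- Separable two-qubit density matrix: convex mixture of products of pure states. -/
def SepState (ρ : Mat4) : Prop :=
  ∃ (n : ℕ) (p : Fin n → ℝ) (u v : Fin n → Fin 2 → ℂ),
    (∀ i, 0 ≤ p i) ∧ (∑ i, p i = 1) ∧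
    (∀ i, IsUnitVec (u i)) ∧ (∀ i, IsUnitVec (v i)) ∧
    ρ = ∑ i, (p i : ℂ) • (vecMulVec (u i) (star (u i)) ⊗ₖ vecMulVec (v i) (star (v i)))

/-- A SEP map: Kraus operators in product form, trace preserving. -/
def IsSEP (T : Mat4 → Mat4) : Prop :=
  ∃ (k : ℕ) (A B : Fin k → Mat2),
    (∑ i, (A i ⊗ₖ B i)ᴴ * (A i ⊗ₖ B i) = 1) ∧
    ∀ X, T X = ∑ i, (A i ⊗ₖ B i) * X * (A i ⊗ₖ B i)ᴴ

/-- CPTP map in Kraus form. -/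
def IsCPTP (T : Mat4 → Mat4) : Prop :=
  ∃ (k : ℕ) (K : Fin k → Mat4),
    (∑ i, (K i)ᴴ * K i = 1) ∧ ∀ X, T X = ∑ i, K i * X * (K i)ᴴ

/-- Non-entangling (NE) map: CPTP and maps separable states to separable states. -/
def IsNE (T : Mat4 → Mat4) : Prop :=
  IsCPTP T ∧ ∀ ρ, SepState ρ → SepState (T ρ)

/-- The MEMS state ρ_λ = λ1 Φ1 + λ2 |01⟩⟨01| + λ3 Φ2 + λ4 |10⟩⟨10|. -/
def mems (l1 l2 l3 l4 : ℝ) : Mat4 :=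
  (l1 : ℂ) • bellProj 0 + (l2 : ℂ) • ketBra (ket 0 1) (ket 0 1) +
  (l3 : ℂ) • bellProj 1 + (l4 : ℂ) • ketBra (ket 1 0) (ket 1 0)

/-- The Bell-diagonal state σ_λ = λ1 Φ1 + λ2 Φ2 + λ3 Φ3 + λ4 Φ4. -/
def bdiag (l1 l2 l3 l4 : ℝ) : Mat4 :=
  (l1 : ℂ) • bellProj 0 + (l2 : ℂ) • bellProj 1 + (l3 : ℂ) • bellProj 2 + (l4 : ℂ) • bellProj 3

/-- The normalized vector |Φ1(ε)⟩ = (|Φ1⟩ + ε|10⟩)/√(1+ε²). -/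
def phi1eps (ε : ℝ) : Vec4 :=
  (Real.sqrt (1 + ε ^ 2) : ℂ)⁻¹ • (bell 0 + (ε : ℂ) • ket 1 0)

lemma hs_mul : ((Real.sqrt 2 : ℂ))⁻¹ * ((Real.sqrt 2 : ℂ))⁻¹ = 2⁻¹ := by
  rw [← mul_inv, ← Complex.ofReal_mul, Real.mul_self_sqrt (by norm_num)]
  norm_num

lemma hs_star : star ((Real.sqrt 2 : ℂ))⁻¹ = ((Real.sqrt 2 : ℂ))⁻¹ := by
  simp [Complex.star_def, map_inv₀, Complex.conj_ofReal]

lemma bellProj0_eq : bellProj 0 = Matrix.of fun p q : Q2 =>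
    if p.1 = p.2 ∧ q.1 = q.2 then (2⁻¹ : ℂ) else 0 := by
  ext ⟨i,j⟩ ⟨k,l⟩
  fin_cases i <;> fin_cases j <;> fin_cases k <;> fin_cases l <;>
    simp [bellProj, ketBra, bell, ket, hs_star, hs_mul, Prod.ext_iff, Matrix.vecHead, Matrix.vecTail]

lemma bellProj1_eq : bellProj 1 = Matrix.of fun p q : Q2 =>
    if p.1 = p.2 ∧ q.1 = q.2 then (if p.1 = q.1 then (2⁻¹ : ℂ) else -2⁻¹) else 0 := by
  ext ⟨i,j⟩ ⟨k,l⟩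
  fin_cases i <;> fin_cases j <;> fin_cases k <;> fin_cases l <;>
    simp [bellProj, ketBra, bell, ket, hs_star, hs_mul, Prod.ext_iff, Matrix.vecHead, Matrix.vecTail]

lemma bellProj2_eq : bellProj 2 = Matrix.of fun p q : Q2 =>
    if p.1 ≠ p.2 ∧ q.1 ≠ q.2 then (2⁻¹ : ℂ) else 0 := by
  ext ⟨i,j⟩ ⟨k,l⟩
  fin_cases i <;> fin_cases j <;> fin_cases k <;> fin_cases l <;>
    simp [bellProj, ketBra, bell, ket, hs_star, hs_mul, Prod.ext_iff, Matrix.vecHead, Matrix.vecTail]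

lemma bellProj3_eq : bellProj 3 = Matrix.of fun p q : Q2 =>
    if p.1 ≠ p.2 ∧ q.1 ≠ q.2 then (if p.1 = q.1 then (2⁻¹ : ℂ) else -2⁻¹) else 0 := by
  ext ⟨i,j⟩ ⟨k,l⟩
  fin_cases i <;> fin_cases j <;> fin_cases k <;> fin_cases l <;>
    simp [bellProj, ketBra, bell, ket, hs_star, hs_mul, Prod.ext_iff, Matrix.vecHead, Matrix.vecTail]

lemma sum_bellProj : ∑ i : Fin 4, bellProj i = (1 : Mat4) := by
  rw [Fin.sum_univ_four, bellProj0_eq, bellProj1_eq, bellProj2_eq, bellProj3_eq]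
  ext ⟨i,j⟩ ⟨k,l⟩
  fin_cases i <;> fin_cases j <;> fin_cases k <;> fin_cases l <;>
    simp [Matrix.one_apply, Prod.ext_iff] <;> norm_num

lemma trace_ketBra_mul (φ : Vec4) (M : Mat4) :
    (ketBra φ φ * M).trace = star φ ⬝ᵥ (M *ᵥ φ) := by
  simp only [Matrix.trace, Matrix.diag, Matrix.mul_apply, ketBra, dotProduct,
    Matrix.mulVec, Pi.star_apply]
  rw [Finset.sum_comm]
  refine Finset.sum_congr rfl fun q _ => ?_
  rw [Finset.mul_sum]
  exact Finset.sum_congr rfl fun p _ => by ring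

lemma ketBra_posSemidef (φ : Vec4) : (ketBra φ φ).PosSemidef := by
  refine Matrix.posSemidef_iff_dotProduct_mulVec.mpr ⟨?_, ?_⟩
  · ext p q
    simp only [conjTranspose_apply, ketBra, star_mul', star_star]
    ring
  · intro x
    have h : star x ⬝ᵥ (ketBra φ φ *ᵥ x) = (star x ⬝ᵥ φ) * star (star x ⬝ᵥ φ) := by
      simp only [dotProduct, Matrix.mulVec, ketBra, Pi.star_apply, star_sum, star_mul',
        star_star]
      rw [Finset.sum_mul]
      refine Finset.sum_congr rfl fun p _ => ?_
      rw [Finset.mul_sum, Finset.mul_sum]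
      exact Finset.sum_congr rfl fun q _ => by ring
    rw [h]
    exact mul_star_self_nonneg _

lemma trace_ketBra_mul_nonneg (φ : Vec4) {M : Mat4} (hM : M.PosSemidef) :
    0 ≤ (ketBra φ φ * M).trace := by
  rw [trace_ketBra_mul]; exact hM.dotProduct_mulVec_nonneg φ

lemma nonneg_to_real {z : ℂ} (h : 0 ≤ z) : z = (z.re : ℂ) ∧ 0 ≤ z.re := by
  rw [Complex.le_def] at h
  refine ⟨Complex.ext rfl ?_, h.1⟩
  simp [← h.2]

lemma cptp_add {T : Mat4 → Mat4} (hT : IsCPTP T) (X Y : Mat4) :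
    T (X + Y) = T X + T Y := by
  obtain ⟨k, K, _, hTX⟩ := hT
  simp [hTX, Matrix.mul_add, Matrix.add_mul, Finset.sum_add_distrib]

lemma cptp_smul {T : Mat4 → Mat4} (hT : IsCPTP T) (c : ℂ) (X : Mat4) :
    T (c • X) = c • T X := by
  obtain ⟨k, K, _, hTX⟩ := hT
  simp [hTX, Matrix.mul_smul, Matrix.smul_mul, Finset.smul_sum]

lemma cptp_trace {T : Mat4 → Mat4} (hT : IsCPTP T) (X : Mat4) :
    (T X).trace = X.trace := by
  obtain ⟨k, K, hK, hTX⟩ := hT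
  rw [hTX, Matrix.trace_sum]
  calc ∑ i, (K i * X * (K i)ᴴ).trace = ∑ i, ((K i)ᴴ * K i * X).trace :=
        Finset.sum_congr rfl fun i _ => Matrix.trace_mul_cycle (K i) X (K i)ᴴ
    _ = ((∑ i, (K i)ᴴ * K i) * X).trace := by rw [Matrix.sum_mul, Matrix.trace_sum]
    _ = X.trace := by rw [hK, one_mul]

lemma cptp_posSemidef {T : Mat4 → Mat4} (hT : IsCPTP T) {X : Mat4} (hX : X.PosSemidef) :
    (T X).PosSemidef := by
  obtain ⟨k, K, _, hTX⟩ := hT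
  rw [hTX]
  exact Finset.sum_induction _ _ (fun a b ha hb => ha.add hb) Matrix.PosSemidef.zero
    fun i _ => hX.mul_mul_conjTranspose_same (K i)

lemma overlap_prod (u v : Fin 2 → ℂ) :
    (bellProj 0 * (vecMulVec u (star u) ⊗ₖ vecMulVec v (star v))).trace
      = ((Complex.normSq (u 0 * v 0 + u 1 * v 1) / 2 : ℝ) : ℂ) := by
  rw [Complex.ofReal_div, ← Complex.mul_conj]
  simp only [bellProj0_eq, Matrix.trace, Matrix.diag, Matrix.mul_apply,
    Fintype.sum_prod_type, Fin.sum_univ_two, Matrix.of_apply, kroneckerMap_apply,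
    vecMulVec_apply, Pi.star_apply, Complex.star_def, map_add, _root_.map_mul]
  norm_num
  ring

lemma normSq_bound {u v : Fin 2 → ℂ} (hu : IsUnitVec u) (hv : IsUnitVec v) :
    Complex.normSq (u 0 * v 0 + u 1 * v 1) ≤ 1 := by
  have hu2 : ‖u 0‖ ^ 2 + ‖u 1‖ ^ 2 = 1 := by
    simpa [IsUnitVec, Fin.sum_univ_two, Complex.sq_norm] using hu
  have hv2 : ‖v 0‖ ^ 2 + ‖v 1‖ ^ 2 = 1 := by
    simpa [IsUnitVec, Fin.sum_univ_two, Complex.sq_norm] using hv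
  have habs : ‖u 0 * v 0 + u 1 * v 1‖ ≤
      ‖u 0‖ * ‖v 0‖ + ‖u 1‖ * ‖v 1‖ := by
    calc ‖u 0 * v 0 + u 1 * v 1‖ ≤
        ‖u 0 * v 0‖ + ‖u 1 * v 1‖ := norm_add_le _ _
      _ = _ := by rw [norm_mul, norm_mul]
  rw [← Complex.sq_norm]
  have h0 : (0:ℝ) ≤ ‖u 0 * v 0 + u 1 * v 1‖ := norm_nonneg _
  nlinarith [sq_nonneg (‖u 0‖ * ‖v 1‖ - ‖u 1‖ * ‖v 0‖),
    norm_nonneg (u 0), norm_nonneg (u 1), norm_nonneg (v 0), norm_nonneg (v 1)]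

lemma sep_overlap {σ : Mat4} (h : SepState σ) :
    ∃ r : ℝ, (bellProj 0 * σ).trace = (r : ℂ) ∧ r ≤ 1 / 2 := by
  obtain ⟨n, p, u, v, hp, hps, hu, hv, hσ⟩ := h
  refine ⟨∑ i, p i * (Complex.normSq (u i 0 * v i 0 + u i 1 * v i 1) / 2), ?_, ?_⟩
  · rw [hσ, Matrix.mul_sum, Matrix.trace_sum]
    push_cast
    refine Finset.sum_congr rfl fun i _ => ?_
    rw [Matrix.mul_smul, Matrix.trace_smul, overlap_prod, smul_eq_mul]
    push_cast
    ring
  · calc (∑ i, p i * (Complex.normSq (u i 0 * v i 0 + u i 1 * v i 1) / 2))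
        ≤ ∑ i, p i * (1 / 2) := by
          refine Finset.sum_le_sum fun i _ => ?_
          have := normSq_bound (hu i) (hv i)
          have hpi := hp i
          nlinarith
      _ = 1 / 2 := by rw [← Finset.sum_mul, hps, one_mul]

lemma sep_e01 : SepState (ketBra (ket 0 1) (ket 0 1)) := by
  refine ⟨1, fun _ => 1, fun _ => ![1, 0], fun _ => ![0, 1],
    fun _ => zero_le_one, by simp, fun _ => by simp [IsUnitVec, Fin.sum_univ_two],
    fun _ => by simp [IsUnitVec, Fin.sum_univ_two], ?_⟩
  ext ⟨i, j⟩ ⟨k, l⟩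
  fin_cases i <;> fin_cases j <;> fin_cases k <;> fin_cases l <;>
    simp [ketBra, ket, vecMulVec_apply, kroneckerMap_apply, -Matrix.cons_vecMulVec, Prod.ext_iff,
      Matrix.vecHead, Matrix.vecTail]

lemma sep_e10 : SepState (ketBra (ket 1 0) (ket 1 0)) := by
  refine ⟨1, fun _ => 1, fun _ => ![0, 1], fun _ => ![1, 0],
    fun _ => zero_le_one, by simp, fun _ => by simp [IsUnitVec, Fin.sum_univ_two],
    fun _ => by simp [IsUnitVec, Fin.sum_univ_two], ?_⟩
  ext ⟨i, j⟩ ⟨k, l⟩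
  fin_cases i <;> fin_cases j <;> fin_cases k <;> fin_cases l <;>
    simp [ketBra, ket, vecMulVec_apply, kroneckerMap_apply, -Matrix.cons_vecMulVec, Prod.ext_iff,
      Matrix.vecHead, Matrix.vecTail]

lemma sep_chi2 : SepState ((2⁻¹ : ℂ) • bellProj 0 + (2⁻¹ : ℂ) • bellProj 1) := by
  refine ⟨2, ![2⁻¹, 2⁻¹], ![![1, 0], ![0, 1]], ![![1, 0], ![0, 1]], ?_, ?_, ?_, ?_, ?_⟩
  · intro i; fin_cases i <;> norm_num
  · norm_num [Fin.sum_univ_two]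
  · intro i; fin_cases i <;> simp [IsUnitVec, Fin.sum_univ_two]
  · intro i; fin_cases i <;> simp [IsUnitVec, Fin.sum_univ_two]
  · rw [bellProj0_eq, bellProj1_eq]
    ext ⟨i, j⟩ ⟨k, l⟩
    fin_cases i <;> fin_cases j <;> fin_cases k <;> fin_cases l <;>
      simp [Fin.sum_univ_two, vecMulVec_apply, kroneckerMap_apply, -Matrix.cons_vecMulVec,
        Matrix.vecHead, Matrix.vecTail] <;> norm_num

lemma vecMulVec_smul_star (c : ℂ) (x : Fin 2 → ℂ) :
    vecMulVec (c • x) (star (c • x)) = (c * star c) • vecMulVec x (star x) := by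
  ext i j
  simp only [vecMulVec_apply, Pi.smul_apply, Pi.star_apply, smul_eq_mul, star_mul',
    Matrix.smul_apply]
  ring

lemma normSq_s : Complex.normSq ((Real.sqrt 2 : ℂ))⁻¹ = 2⁻¹ := by
  rw [← Complex.ofReal_inv, Complex.normSq_ofReal, ← mul_inv,
    Real.mul_self_sqrt (by norm_num)]

lemma unit_s (a : ℂ) (h : Complex.normSq a = 1) :
    IsUnitVec (((Real.sqrt 2 : ℂ))⁻¹ • ![1, a]) := by
  simp [IsUnitVec, Fin.sum_univ_two, Complex.normSq_mul, normSq_s, h]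
  norm_num

lemma sep_chi3 : SepState ((2⁻¹ : ℂ) • bellProj 0
    + (4⁻¹ : ℂ) • ketBra (ket 0 1) (ket 0 1) + (4⁻¹ : ℂ) • ketBra (ket 1 0) (ket 1 0)) := by
  classical
  set s : ℂ := ((Real.sqrt 2 : ℂ))⁻¹ with hsdef
  set w : Fin 4 → Fin 2 → ℂ := ![![1, 1], ![1, -1], ![1, Complex.I], ![1, -Complex.I]] with hw
  set w' : Fin 4 → Fin 2 → ℂ := ![![1, 1], ![1, -1], ![1, -Complex.I], ![1, Complex.I]] with hw'
  refine ⟨4, fun _ => 4⁻¹, fun k => s • w k, fun k => s • w' k, fun _ => by norm_num,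
    by norm_num [Fin.sum_univ_four], ?_, ?_, ?_⟩
  · intro k
    fin_cases k <;> exact unit_s _ (by simp)
  · intro k
    fin_cases k <;> exact unit_s _ (by simp)
  · have hss : s * star s = 2⁻¹ := by rw [hsdef, hs_star, hs_mul]
    have hterm : ∀ k : Fin 4, ((4⁻¹ : ℝ) : ℂ) •
        (vecMulVec (s • w k) (star (s • w k)) ⊗ₖ vecMulVec (s • w' k) (star (s • w' k)))
        = (16⁻¹ : ℂ) • (vecMulVec (w k) (star (w k)) ⊗ₖ vecMulVec (w' k) (star (w' k))) := by
      intro k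
      rw [vecMulVec_smul_star, vecMulVec_smul_star, hss, smul_kronecker, kronecker_smul,
        smul_smul, smul_smul]
      norm_num
    rw [Finset.sum_congr rfl fun k _ => hterm k, ← Finset.smul_sum]
    rw [bellProj0_eq]
    ext ⟨i, j⟩ ⟨k, l⟩
    fin_cases i <;> fin_cases j <;> fin_cases k <;> fin_cases l <;>
      simp [hw, hw', Fin.sum_univ_four, vecMulVec_apply, kroneckerMap_apply, -Matrix.cons_vecMulVec, ketBra, ket,
        Matrix.vecHead, Matrix.vecTail, Prod.ext_iff, Complex.star_def, Complex.conj_I] <;>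
      norm_num

lemma tp0 : (bellProj 0 * bellProj 0).trace = 1 := by
  rw [bellProj0_eq]
  simp [Matrix.trace, Matrix.mul_apply, Fintype.sum_prod_type, Fin.sum_univ_two,
    Matrix.of_apply]
  norm_num

lemma tp1 : (bellProj 0 * bellProj 1).trace = 0 := by
  rw [bellProj0_eq, bellProj1_eq]
  simp [Matrix.trace, Matrix.mul_apply, Fintype.sum_prod_type, Fin.sum_univ_two,
    Matrix.of_apply]

lemma tp2 : (bellProj 0 * bellProj 2).trace = 0 := by
  rw [bellProj0_eq, bellProj2_eq]
  simp [Matrix.trace, Matrix.mul_apply, Fintype.sum_prod_type, Fin.sum_univ_two,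
    Matrix.of_apply]

lemma tp3 : (bellProj 0 * bellProj 3).trace = 0 := by
  rw [bellProj0_eq, bellProj3_eq]
  simp [Matrix.trace, Matrix.mul_apply, Fintype.sum_prod_type, Fin.sum_univ_two,
    Matrix.of_apply]

lemma trace_phi1 : (bellProj 0).trace = 1 := by
  rw [bellProj0_eq]
  simp [Matrix.trace, Matrix.diag, Fintype.sum_prod_type, Fin.sum_univ_two]


theorem NE_rank4_forced_values (l1 l2 l3 l4 : ℝ)
    (h12 : l2 ≤ l1) (h23 : l3 ≤ l2) (h34 : l4 ≤ l3) (h4 : 0 ≤ l4)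
    (hsum : l1 + l2 + l3 + l4 = 1) (ha : 2 * l2 + l3 - l1 < 0)
    (T : Mat4 → Mat4) (hT : IsNE T)
    (hmap : T (mems l1 l2 l3 l4) = bdiag l1 l2 l3 l4) :
    (bellProj 0 * T (ketBra (ket 0 1) (ket 0 1))).trace = 0 ∧
    (bellProj 0 * T (ketBra (ket 1 0) (ket 1 0))).trace = 0 ∧
    (bellProj 0 * T (bellProj 1)).trace = 0 ∧
    (bellProj 0 * T (bellProj 0)).trace = 1 ∧
    (∀ i : Fin 4, i ≠ 0 → (bellProj i * T (bellProj 0)).trace = 0) := by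
  obtain ⟨hCPTP, hNE⟩ := hT
  have hpsd0 : (T (bellProj 0)).PosSemidef :=
    cptp_posSemidef hCPTP (ketBra_posSemidef (bell 0))
  have hpsd1 : (T (bellProj 1)).PosSemidef :=
    cptp_posSemidef hCPTP (ketBra_posSemidef (bell 1))
  have hpsdE01 : (T (ketBra (ket 0 1) (ket 0 1))).PosSemidef :=
    cptp_posSemidef hCPTP (ketBra_posSemidef (ket 0 1))
  have hpsdE10 : (T (ketBra (ket 1 0) (ket 1 0))).PosSemidef :=
    cptp_posSemidef hCPTP (ketBra_posSemidef (ket 1 0))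
  have hAnn : 0 ≤ (bellProj 0 * T (bellProj 0)).trace :=
    trace_ketBra_mul_nonneg (bell 0) hpsd0
  have hBnn : 0 ≤ (bellProj 0 * T (ketBra (ket 0 1) (ket 0 1))).trace :=
    trace_ketBra_mul_nonneg (bell 0) hpsdE01
  have hCnn : 0 ≤ (bellProj 0 * T (bellProj 1)).trace :=
    trace_ketBra_mul_nonneg (bell 0) hpsd1
  have hDnn : 0 ≤ (bellProj 0 * T (ketBra (ket 1 0) (ket 1 0))).trace :=
    trace_ketBra_mul_nonneg (bell 0) hpsdE10
  obtain ⟨hAeq, hA0⟩ := nonneg_to_real hAnn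
  obtain ⟨hBeq, hB0⟩ := nonneg_to_real hBnn
  obtain ⟨hCeq, hC0⟩ := nonneg_to_real hCnn
  obtain ⟨hDeq, hD0⟩ := nonneg_to_real hDnn
  set a := ((bellProj 0 * T (bellProj 0)).trace).re with hadef
  set b := ((bellProj 0 * T (ketBra (ket 0 1) (ket 0 1))).trace).re with hbdef
  set c := ((bellProj 0 * T (bellProj 1)).trace).re with hcdef
  set d := ((bellProj 0 * T (ketBra (ket 1 0) (ket 1 0))).trace).re with hddef
  -- linearity of T on the four basic inputs
  have hTcomb : ∀ c1 c2 c3 c4 : ℂ,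
      T (c1 • bellProj 0 + c2 • ketBra (ket 0 1) (ket 0 1) + c3 • bellProj 1
          + c4 • ketBra (ket 1 0) (ket 1 0))
        = c1 • T (bellProj 0) + c2 • T (ketBra (ket 0 1) (ket 0 1))
          + c3 • T (bellProj 1) + c4 • T (ketBra (ket 1 0) (ket 1 0)) := by
    intro c1 c2 c3 c4
    rw [cptp_add hCPTP, cptp_add hCPTP, cptp_add hCPTP, cptp_smul hCPTP, cptp_smul hCPTP,
      cptp_smul hCPTP, cptp_smul hCPTP]
  have htr : ∀ c1 c2 c3 c4 : ℂ,
      (bellProj 0 * T (c1 • bellProj 0 + c2 • ketBra (ket 0 1) (ket 0 1) + c3 • bellProj 1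
          + c4 • ketBra (ket 1 0) (ket 1 0))).trace
        = c1 * (bellProj 0 * T (bellProj 0)).trace
          + c2 * (bellProj 0 * T (ketBra (ket 0 1) (ket 0 1))).trace
          + c3 * (bellProj 0 * T (bellProj 1)).trace
          + c4 * (bellProj 0 * T (ketBra (ket 1 0) (ket 1 0))).trace := by
    intro c1 c2 c3 c4
    rw [hTcomb]
    simp [Matrix.mul_add, Matrix.mul_smul, Matrix.trace_add, Matrix.trace_smul, smul_eq_mul]
  -- the main trace identity from hmap
  have hbd : (bellProj 0 * bdiag l1 l2 l3 l4).trace = (l1 : ℂ) := by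
    simp [bdiag, Matrix.mul_add, Matrix.mul_smul, Matrix.trace_add, Matrix.trace_smul,
      smul_eq_mul, tp0, tp1, tp2, tp3]
  have hIc : (l1 : ℂ) * (bellProj 0 * T (bellProj 0)).trace
      + (l2 : ℂ) * (bellProj 0 * T (ketBra (ket 0 1) (ket 0 1))).trace
      + (l3 : ℂ) * (bellProj 0 * T (bellProj 1)).trace
      + (l4 : ℂ) * (bellProj 0 * T (ketBra (ket 1 0) (ket 1 0))).trace = (l1 : ℂ) := by
    have h1 := htr (l1 : ℂ) (l2 : ℂ) (l3 : ℂ) (l4 : ℂ)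
    have h2 : (l1 : ℂ) • bellProj 0 + (l2 : ℂ) • ketBra (ket 0 1) (ket 0 1)
        + (l3 : ℂ) • bellProj 1 + (l4 : ℂ) • ketBra (ket 1 0) (ket 1 0)
        = mems l1 l2 l3 l4 := rfl
    rw [h2, hmap, hbd] at h1
    exact h1.symm
  have hIr : l1 * a + l2 * b + l3 * c + l4 * d = l1 := by
    rw [hAeq, hBeq, hCeq, hDeq] at hIc
    exact_mod_cast hIc
  -- constraint from separable state (Φ1 + Φ2)/2
  have hac : a + c ≤ 1 := by
    obtain ⟨r2, hr2eq, hr2le⟩ := sep_overlap (hNE _ sep_chi2)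
    have h2 := htr 2⁻¹ 0 2⁻¹ 0
    have e2 : (2⁻¹ : ℂ) • bellProj 0 + (0 : ℂ) • ketBra (ket 0 1) (ket 0 1)
        + (2⁻¹ : ℂ) • bellProj 1 + (0 : ℂ) • ketBra (ket 1 0) (ket 1 0)
        = (2⁻¹ : ℂ) • bellProj 0 + (2⁻¹ : ℂ) • bellProj 1 := by
      simp
    rw [e2, hr2eq, hAeq, hBeq, hCeq, hDeq] at h2
    norm_num at h2
    have hr' : ((1/2 * a + 1/2 * c : ℝ) : ℂ) = (r2 : ℂ) := by
      push_cast
      linear_combination h2.symm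
    have hr : 1/2 * a + 1/2 * c = r2 := by exact_mod_cast hr' 
    linarith
  -- constraint from separable state Φ1/2 + |01⟩⟨01|/4 + |10⟩⟨10|/4
  have habd : 2 * a + b + d ≤ 2 := by
    obtain ⟨r3, hr3eq, hr3le⟩ := sep_overlap (hNE _ sep_chi3)
    have h3 := htr 2⁻¹ 4⁻¹ 0 4⁻¹
    have e3 : (2⁻¹ : ℂ) • bellProj 0 + (4⁻¹ : ℂ) • ketBra (ket 0 1) (ket 0 1)
        + (0 : ℂ) • bellProj 1 + (4⁻¹ : ℂ) • ketBra (ket 1 0) (ket 1 0)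
        = (2⁻¹ : ℂ) • bellProj 0 + (4⁻¹ : ℂ) • ketBra (ket 0 1) (ket 0 1)
          + (4⁻¹ : ℂ) • ketBra (ket 1 0) (ket 1 0) := by
      simp
    rw [e3, hr3eq, hAeq, hBeq, hCeq, hDeq] at h3
    norm_num at h3
    have hr' : ((1/2 * a + 1/4 * b + 1/4 * d : ℝ) : ℂ) = (r3 : ℂ) := by
      push_cast
      linear_combination h3.symm
    have hr : 1/2 * a + 1/4 * b + 1/4 * d = r3 := by exact_mod_cast hr' 
    linarith
  -- arithmetic: force a = 1, b = c = d = 0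
  have hl2 : 0 ≤ l2 := by linarith
  have hl3 : 0 ≤ l3 := by linarith
  have haux : l4 * d ≤ l2 * d := mul_le_mul_of_nonneg_right (by linarith) hD0
  have ha1 : a ≤ 1 := by linarith
  have hbd2 : b + d ≤ 2 * (1 - a) := by linarith
  have hb2 : l2 * (b + d) ≤ l2 * (2 * (1 - a)) := mul_le_mul_of_nonneg_left hbd2 hl2
  have hc2 : l3 * c ≤ l3 * (1 - a) := mul_le_mul_of_nonneg_left (by linarith) hl3
  have hkey : l1 ≤ l1 * a + 2 * l2 * (1 - a) + l3 * (1 - a) := by nlinarith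
  have hage : 1 ≤ a := by
    rcases le_or_gt 1 a with h | h
    · exact h
    · exfalso
      have hpos : 0 < (l1 - 2 * l2 - l3) * (1 - a) := mul_pos (by linarith) (by linarith)
      nlinarith
  have haeq : a = 1 := le_antisymm ha1 hage
  have hbeq : b = 0 := by linarith
  have hdeq : d = 0 := by linarith
  have hceq : c = 0 := by linarith
  refine ⟨?_, ?_, ?_, ?_, ?_⟩
  · rw [hBeq, hbeq]; norm_num
  · rw [hDeq, hdeq]; norm_num
  · rw [hCeq, hceq]; norm_num
  · rw [hAeq, haeq]; norm_num
  · -- orthogonality of images: other Bell overlaps of T Φ1 vanish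
    have hA1nn : 0 ≤ (bellProj 1 * T (bellProj 0)).trace :=
      trace_ketBra_mul_nonneg (bell 1) hpsd0
    have hA2nn : 0 ≤ (bellProj 2 * T (bellProj 0)).trace :=
      trace_ketBra_mul_nonneg (bell 2) hpsd0
    have hA3nn : 0 ≤ (bellProj 3 * T (bellProj 0)).trace :=
      trace_ketBra_mul_nonneg (bell 3) hpsd0
    obtain ⟨hA1eq, hA1_0⟩ := nonneg_to_real hA1nn
    obtain ⟨hA2eq, hA2_0⟩ := nonneg_to_real hA2nn
    obtain ⟨hA3eq, hA3_0⟩ := nonneg_to_real hA3nn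
    have hsum4 : (bellProj 0 * T (bellProj 0)).trace + (bellProj 1 * T (bellProj 0)).trace
        + (bellProj 2 * T (bellProj 0)).trace + (bellProj 3 * T (bellProj 0)).trace = 1 := by
      have h1 : ∑ i : Fin 4, (bellProj i * T (bellProj 0)).trace
          = ((1 : Mat4) * T (bellProj 0)).trace := by
        rw [← Matrix.trace_sum, ← Matrix.sum_mul, sum_bellProj]
      rw [Fin.sum_univ_four] at h1
      rw [one_mul, cptp_trace hCPTP, trace_phi1] at h1
      exact h1
    rw [hAeq, haeq, hA1eq, hA2eq, hA3eq] at hsum4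
    have hr : (1 : ℝ) + ((bellProj 1 * T (bellProj 0)).trace).re
        + ((bellProj 2 * T (bellProj 0)).trace).re
        + ((bellProj 3 * T (bellProj 0)).trace).re = 1 := by
      exact_mod_cast hsum4
    have hz1 : ((bellProj 1 * T (bellProj 0)).trace).re = 0 := by linarith
    have hz2 : ((bellProj 2 * T (bellProj 0)).trace).re = 0 := by linarith
    have hz3 : ((bellProj 3 * T (bellProj 0)).trace).re = 0 := by linarith
    intro i hi
    fin_cases i
    · exact absurd rfl hi
    · rw [show ((⟨1, by norm_num⟩ : Fin 4)) = (1 : Fin 4) from rfl, hA1eq, hz1]; norm_num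
    · rw [show ((⟨2, by norm_num⟩ : Fin 4)) = (2 : Fin 4) from rfl, hA2eq, hz2]; norm_num
    · rw [show ((⟨3, by norm_num⟩ : Fin 4)) = (3 : Fin 4) from rfl, hA3eq, hz3]; norm_num
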